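/- With notation as in the monad construction: a matrix A ∈ W* ⊗ ((I₁⊗U) ⊕ (I₂⊗U*)) defines a surjective map of sheaves W⊗O_F → (I₁⊗O_F(1,0)) ⊕ (I₂⊗O_F(0,1)) if and only if Aᵗ is nondegenerate, i.e. there do not exist u₁ ∈ U \ {0}, u₂ ∈ U* \ {0} with u₂(u₁) = 0 such that the induced linear map Aᵗ((-⊗u₁) ⊕ (-⊗u₂)) : I₁* ⊕ I₂* → W fails to be injective. -/

import Mathlib

/-! The map `I₁* × I₂* → W*` is the transpose of `w ↦ (Φ₁ u₁ w, Φ₂ u₂ w)` precomposed with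
`I₁* × I₂* ≃ (I₁ × I₂)*`, and over a field a linear map is surjective iff its transpose is
injective. -/

open Module

theorem LinearMap.surjective_prod_iff_injective_dual_comp_add {K W I1 I2 : Type*} [Field K]
    [AddCommGroup W] [Module K W] [AddCommGroup I1] [Module K I1]
    [AddCommGroup I2] [Module K I2] (f1 : W →ₗ[K] I1) (f2 : W →ₗ[K] I2) :
    Function.Surjective (fun w : W => (f1 w, f2 w)) ↔
      Function.Injective (fun φ : Dual K I1 × Dual K I2 =>
        (φ.1.comp f1 + φ.2.comp f2 : Dual K W)) := by
  have transpose_eq : (fun φ : Dual K I1 × Dual K I2 => (φ.1.comp f1 + φ.2.comp f2 : Dual K W)) =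
      (f1.prod f2).dualMap ∘ dualProdDualEquivDual K I1 I2 := by
    funext φ
    ext w
    simp
  rw [transpose_eq, EquivLike.injective_comp, LinearMap.dualMap_injective_iff]
  rfl

theorem stmt_16_general (K : Type*) [Field K] (U W I1 I2 : Type*)
    [AddCommGroup U] [Module K U] [AddCommGroup W] [Module K W]
    [AddCommGroup I1] [Module K I1] [AddCommGroup I2] [Module K I2]
    (Φ1 : U →ₗ[K] W →ₗ[K] I1) (Φ2 : Module.Dual K U →ₗ[K] W →ₗ[K] I2) :
    (∀ (u1 : U) (u2 : Module.Dual K U), u1 ≠ 0 → u2 ≠ 0 → u2 u1 = 0 →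
        Function.Surjective (fun w : W => ((Φ1 u1) w, (Φ2 u2) w))) ↔
      ¬ ∃ (u1 : U) (u2 : Module.Dual K U), u1 ≠ 0 ∧ u2 ≠ 0 ∧ u2 u1 = 0 ∧
        ¬ Function.Injective (fun φ : Module.Dual K I1 × Module.Dual K I2 =>
            (φ.1.comp (Φ1 u1) + φ.2.comp (Φ2 u2) : Module.Dual K W)) := by
  simp only [not_exists, not_and, not_not, LinearMap.surjective_prod_iff_injective_dual_comp_add]

/-- A matrix `A ∈ W* ⊗ ((I₁⊗U) ⊕ (I₂⊗U*))`, encoded by the contractions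
`Φ₁ : U → Hom(W, I₁)` and `Φ₂ : U* → Hom(W, I₂)`, defines a surjective map of sheaves
`W ⊗ O_F → (I₁ ⊗ O_F(1,0)) ⊕ (I₂ ⊗ O_F(0,1))` — i.e. the evaluated linear map
`W → I₁ ⊕ I₂` is surjective at every point `([u₁],[u₂])` of the flag variety
`F = {(u₁,u₂) : u₂(u₁) = 0} ⊂ ℙ(U) × ℙ(U*)` — if and only if `Aᵗ` is nondegenerate: there are
no `u₁ ∈ U \ {0}`, `u₂ ∈ U* \ {0}` with `u₂(u₁) = 0` for which the induced linear map
`Aᵗ((-⊗u₁) ⊕ (-⊗u₂)) : I₁* ⊕ I₂* → W*` fails to be injective. -/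
theorem stmt_16 (K : Type*) [Field K] (U W I1 I2 : Type*)
    [AddCommGroup U] [Module K U] [AddCommGroup W] [Module K W]
    [AddCommGroup I1] [Module K I1] [AddCommGroup I2] [Module K I2]
    [FiniteDimensional K U] [FiniteDimensional K W]
    [FiniteDimensional K I1] [FiniteDimensional K I2]
    (hU : Module.finrank K U = 3)
    (Φ1 : U →ₗ[K] W →ₗ[K] I1) (Φ2 : Module.Dual K U →ₗ[K] W →ₗ[K] I2) :
    (∀ (u1 : U) (u2 : Module.Dual K U), u1 ≠ 0 → u2 ≠ 0 → u2 u1 = 0 →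
        Function.Surjective (fun w : W => ((Φ1 u1) w, (Φ2 u2) w))) ↔
      ¬ ∃ (u1 : U) (u2 : Module.Dual K U), u1 ≠ 0 ∧ u2 ≠ 0 ∧ u2 u1 = 0 ∧
        ¬ Function.Injective (fun φ : Module.Dual K I1 × Module.Dual K I2 =>
            (φ.1.comp (Φ1 u1) + φ.2.comp (Φ2 u2) : Module.Dual K W)) :=
  stmt_16_general K U W I1 I2 Φ1 Φ2
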